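/- arXiv:1612.05115 — 2 statements merged into one kernel-verified Lean document; each statement's English description precedes it below -/
import Mathlib

section
/- Let n = 2 and let Ω ⊆ ℝ² be bounded with d = 2 sup_{y∈Ω} |y|. Then for all x ∈ ℝ² with |x| ≥ d and all y ∈ Ω̄, one has |G(x,y)| ≤ (2d/π)·(1/|x|), where G(x,y) = (1/2π)(log|x−y| − log|ς(x)−y|). -/
/-!
Writing `x' = ς(x)`, the points `x` and `x'` have the same norm, so the polarization identity gives
`‖x - y‖² - ‖x' - y‖² = 2 ⟪x' - x, y⟫ = O(‖x‖ ‖y‖)`. For `‖y‖ ≤ d / 2 ≤ ‖x‖ / 2` both squared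
distances are at least `‖x‖² / 4`, where `log` is Lipschitz with constant `4 / ‖x‖²`; hence their
logarithms differ by `O(‖y‖ / ‖x‖)`.
-/

/-- Reflection across the hyperplane `{x_n = 0}` in `ℝⁿ`. -/
noncomputable def reflHyp (n : ℕ) (x : EuclideanSpace ℝ (Fin n)) : EuclideanSpace ℝ (Fin n) :=
  WithLp.toLp 2 (fun (i : Fin n) => if (i : ℕ) = n - 1 then -x i else x i)

open Real

lemma norm_reflHyp (n : ℕ) (x : EuclideanSpace ℝ (Fin n)) : ‖reflHyp n x‖ = ‖x‖ := by
  rw [EuclideanSpace.norm_eq, EuclideanSpace.norm_eq]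
  congr 1
  refine Finset.sum_congr rfl fun i _ => ?_
  change ‖(if (i : ℕ) = n - 1 then -x i else x i)‖ ^ 2 = _
  split_ifs <;> simp

lemma abs_log_sub_log_le_of_le {m s t : ℝ} (hm : 0 < m) (hs : m ≤ s) (ht : m ≤ t) :
    |log s - log t| ≤ |s - t| / m := by
  wlog hts : t ≤ s generalizing s t
  · rw [abs_sub_comm, abs_sub_comm s]
    exact this ht hs (le_of_not_ge hts)
  have ht0 : 0 < t := hm.trans_le ht
  rw [abs_of_nonneg (sub_nonneg.2 (log_le_log ht0 hts)), abs_of_nonneg (sub_nonneg.2 hts)]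
  have hs0 : 0 < s := hm.trans_le hs
  calc log s - log t = log (s / t) := (log_div hs0.ne' ht0.ne').symm
    _ ≤ s / t - 1 := log_le_sub_one_of_pos (div_pos hs0 ht0)
    _ = (s - t) / t := by field_simp
    _ ≤ (s - t) / m := div_le_div_of_nonneg_left (sub_nonneg.2 hts) hm ht

lemma Bornology.IsBounded.norm_le_sSup_of_mem_closure {E : Type*} [SeminormedAddCommGroup E] {s : Set E}
    (hs : Bornology.IsBounded s) {y : E} (hy : y ∈ closure s) : ‖y‖ ≤ sSup (norm '' s) := by
  obtain ⟨C, hC⟩ := hs.exists_norm_le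
  have hbdd : BddAbove (norm '' s) := ⟨C, by rintro _ ⟨z, hz, rfl⟩; exact hC z hz⟩
  exact closure_minimal (fun z hz => le_csSup hbdd ⟨z, hz, rfl⟩)
    (isClosed_le continuous_norm continuous_const) hy

section InnerProductSpace

variable {E : Type*} [NormedAddCommGroup E] [InnerProductSpace ℝ E]

lemma abs_norm_sub_sq_sub_norm_sub_sq_le {x x' y : E} (hx' : ‖x'‖ = ‖x‖) :
    |‖x - y‖ ^ 2 - ‖x' - y‖ ^ 2| ≤ 4 * ‖x‖ * ‖y‖ := by
  have hpolar : ‖x - y‖ ^ 2 - ‖x' - y‖ ^ 2 = 2 * inner ℝ (x' - x) y := by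
    rw [norm_sub_sq_real, norm_sub_sq_real, hx', inner_sub_left]
    ring
  have hdiff : ‖x' - x‖ ≤ 2 * ‖x‖ := by linarith [norm_sub_le x' x]
  rw [hpolar, abs_mul, abs_two]
  nlinarith [abs_real_inner_le_norm (x' - x) y, norm_nonneg y]

lemma abs_log_norm_sub_sub_log_norm_sub_le {x x' y : E} (hx' : ‖x'‖ = ‖x‖)
    (hy : 2 * ‖y‖ ≤ ‖x‖) : |log ‖x - y‖ - log ‖x' - y‖| ≤ 8 * ‖y‖ / ‖x‖ := by
  rcases (norm_nonneg x).eq_or_lt with hx0 | hx0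
  · rw [eq_comm, norm_eq_zero] at hx0
    rw [hx0, norm_zero, norm_eq_zero] at hx'
    simp [hx0, hx']
  have hfar : ‖x‖ / 2 ≤ ‖x - y‖ := by linarith [norm_sub_norm_le x y]
  have hfar' : ‖x‖ / 2 ≤ ‖x' - y‖ := by linarith [norm_sub_norm_le x' y]
  have hsq := abs_log_sub_log_le_of_le (by positivity) (pow_le_pow_left₀ (by positivity) hfar 2)
    (pow_le_pow_left₀ (by positivity) hfar' 2)
  rw [log_pow, log_pow, ← mul_sub, abs_mul, Nat.abs_cast] at hsq
  calc |log ‖x - y‖ - log ‖x' - y‖|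
      ≤ |‖x - y‖ ^ 2 - ‖x' - y‖ ^ 2| / (‖x‖ / 2) ^ 2 / 2 := by
        rw [le_div_iff₀ two_pos]; push_cast at hsq; linarith
    _ ≤ 4 * ‖x‖ * ‖y‖ / (‖x‖ / 2) ^ 2 / 2 := by
        gcongr; exact abs_norm_sub_sq_sub_norm_sub_sq_le hx'
    _ = 8 * ‖y‖ / ‖x‖ := by field_simp; ring

end InnerProductSpace

theorem greenG_decay_dim_two_general (Ω : Set (EuclideanSpace ℝ (Fin 2)))
    (hb : Bornology.IsBounded Ω)
    (d : ℝ) (hd : d = 2 * sSup ((fun y : EuclideanSpace ℝ (Fin 2) => ‖y‖) '' Ω))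
    (x : EuclideanSpace ℝ (Fin 2)) (hx : d ≤ ‖x‖)
    (y : EuclideanSpace ℝ (Fin 2)) (hy : y ∈ closure Ω) :
    |(1 / (2 * Real.pi)) * (Real.log ‖x - y‖ - Real.log ‖reflHyp 2 x - y‖)| ≤
      (2 * d / Real.pi) * (1 / ‖x‖) := by
  have hyd : 2 * ‖y‖ ≤ d := hd ▸ by linarith [hb.norm_le_sSup_of_mem_closure hy]
  have hlog := abs_log_norm_sub_sub_log_norm_sub_le (norm_reflHyp 2 x) (hyd.trans hx)
  rw [abs_mul, abs_of_pos (by positivity)]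
  calc 1 / (2 * π) * |log ‖x - y‖ - log ‖reflHyp 2 x - y‖|
      ≤ 1 / (2 * π) * (8 * ‖y‖ / ‖x‖) := by gcongr
    _ ≤ 1 / (2 * π) * (4 * d / ‖x‖) := by gcongr 1 / (2 * π) * (?_ / _); linarith
    _ = 2 * d / π * (1 / ‖x‖) := by field_simp; ring

/-- Decay of the half-plane Green's function in dimension 2:
`|G(x,y)| ≤ (2d/π)·(1/|x|)` for `|x| ≥ d = 2 sup_{y∈Ω}|y|` and `y ∈ Ω̄`. -/
theorem greenG_decay_dim_two (Ω : Set (EuclideanSpace ℝ (Fin 2)))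
    (hne : Ω.Nonempty) (hb : Bornology.IsBounded Ω)
    (d : ℝ) (hd : d = 2 * sSup ((fun y : EuclideanSpace ℝ (Fin 2) => ‖y‖) '' Ω))
    (x : EuclideanSpace ℝ (Fin 2)) (hx : d ≤ ‖x‖)
    (y : EuclideanSpace ℝ (Fin 2)) (hy : y ∈ closure Ω) :
    |(1 / (2 * Real.pi)) * (Real.log ‖x - y‖ - Real.log ‖reflHyp 2 x - y‖)| ≤
      (2 * d / Real.pi) * (1 / ‖x‖) :=
  greenG_decay_dim_two_general Ω hb d hd x hx y hy
end

section
/- Fix x = (x₁,x₂) with x₂ > 0 and x ≠ 0. Then the toy-problem solution u_{(ε₁,ε₂)}(x), as a function of (ε₁,ε₂), tends to 0 as (ε₁,ε₂) → (0,0) with ε₁, ε₂ > 0. -/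
/-- Explicit solution of the toy Dirichlet problem in the perforated upper
half plane. -/
noncomputable def toyU (ε₁ ε₂ : ℝ) (p : ℝ × ℝ) : ℝ :=
  (Real.log (p.1 ^ 2 + (p.2 - ε₁ * Real.sqrt (1 - ε₂ ^ 2)) ^ 2) -
      Real.log (p.1 ^ 2 + (p.2 + ε₁ * Real.sqrt (1 - ε₂ ^ 2)) ^ 2)) /
    (Real.log (1 - Real.sqrt (1 - ε₂ ^ 2)) - Real.log (1 + Real.sqrt (1 - ε₂ ^ 2)))

/-- For a fixed point `x` in the open upper half plane, `u_{(ε₁,ε₂)}(x) → 0`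
as `(ε₁,ε₂) → (0,0)` with `ε₁, ε₂ > 0`. -/
theorem toyU_tendsto_zero_as_eps_to_zero (x : ℝ × ℝ) (hx2 : 0 < x.2) (hx : x ≠ 0) :
    Filter.Tendsto (fun ε : ℝ × ℝ => toyU ε.1 ε.2 x)
      (nhdsWithin (0, 0) {ε : ℝ × ℝ | 0 < ε.1 ∧ 0 < ε.2 ∧ ε.2 < 1})
      (nhds 0) := by
  have hx' : (0:ℝ) < x.1 ^ 2 + x.2 ^ 2 := by positivity
  set l := nhdsWithin ((0,0) : ℝ × ℝ) {ε : ℝ × ℝ | 0 < ε.1 ∧ 0 < ε.2 ∧ ε.2 < 1} with hl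
  -- ε₁ √(1-ε₂²) → 0
  have hs : Filter.Tendsto (fun ε : ℝ × ℝ => ε.1 * Real.sqrt (1 - ε.2 ^ 2)) l (nhds 0) := by
    have hc : Continuous fun ε : ℝ × ℝ => ε.1 * Real.sqrt (1 - ε.2 ^ 2) :=
      continuous_fst.mul ((continuous_const.sub (continuous_snd.pow 2)).sqrt)
    have := (hc.continuousAt (x := ((0,0):ℝ×ℝ))).tendsto.mono_left (nhdsWithin_le_nhds (s := {ε : ℝ × ℝ | 0 < ε.1 ∧ 0 < ε.2 ∧ ε.2 < 1}))
    simpa using this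
  -- numerator tends to 0
  have h1 : Filter.Tendsto
      (fun ε : ℝ × ℝ => x.1 ^ 2 + (x.2 - ε.1 * Real.sqrt (1 - ε.2 ^ 2)) ^ 2) l
      (nhds (x.1 ^ 2 + x.2 ^ 2)) := by
    have := (tendsto_const_nhds (x := x.1 ^ 2) (f := l)).add (((tendsto_const_nhds (x := x.2) (f := l)).sub hs).pow 2)
    simpa using this
  have h2 : Filter.Tendsto
      (fun ε : ℝ × ℝ => x.1 ^ 2 + (x.2 + ε.1 * Real.sqrt (1 - ε.2 ^ 2)) ^ 2) l
      (nhds (x.1 ^ 2 + x.2 ^ 2)) := by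
    have := (tendsto_const_nhds (x := x.1 ^ 2) (f := l)).add (((tendsto_const_nhds (x := x.2) (f := l)).add hs).pow 2)
    simpa using this
  have hlog : ContinuousAt Real.log (x.1 ^ 2 + x.2 ^ 2) := Real.continuousAt_log hx'.ne'
  have hnum : Filter.Tendsto (fun ε : ℝ × ℝ =>
      Real.log (x.1 ^ 2 + (x.2 - ε.1 * Real.sqrt (1 - ε.2 ^ 2)) ^ 2) -
      Real.log (x.1 ^ 2 + (x.2 + ε.1 * Real.sqrt (1 - ε.2 ^ 2)) ^ 2)) l (nhds 0) := by
    have := (hlog.tendsto.comp h1).sub (hlog.tendsto.comp h2)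
    simpa [Function.comp] using this
  -- denominator tends to atBot
  have hA : Filter.Tendsto (fun ε : ℝ × ℝ => 1 - Real.sqrt (1 - ε.2 ^ 2)) l
      (nhdsWithin 0 (Set.Ioi 0)) := by
    rw [tendsto_nhdsWithin_iff]
    constructor
    · have hc : Continuous fun ε : ℝ × ℝ => 1 - Real.sqrt (1 - ε.2 ^ 2) :=
        continuous_const.sub ((continuous_const.sub (continuous_snd.pow 2)).sqrt)
      have := (hc.continuousAt (x := ((0,0):ℝ×ℝ))).tendsto.mono_left (nhdsWithin_le_nhds (s := {ε : ℝ × ℝ | 0 < ε.1 ∧ 0 < ε.2 ∧ ε.2 < 1}))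
      simpa using this
    · filter_upwards [self_mem_nhdsWithin] with ε hε
      obtain ⟨-, h2, h3⟩ := hε
      have hlt : Real.sqrt (1 - ε.2 ^ 2) < 1 := by
        rw [Real.sqrt_lt' one_pos]
        nlinarith
      simpa using sub_pos.mpr hlt
  have hA' : Filter.Tendsto (fun ε : ℝ × ℝ => Real.log (1 - Real.sqrt (1 - ε.2 ^ 2))) l
      Filter.atBot := Real.tendsto_log_nhdsGT_zero.comp hA
  have hB : Filter.Tendsto (fun ε : ℝ × ℝ => Real.log (1 + Real.sqrt (1 - ε.2 ^ 2))) l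
      (nhds (Real.log 2)) := by
    have harg : Filter.Tendsto (fun ε : ℝ × ℝ => 1 + Real.sqrt (1 - ε.2 ^ 2)) l (nhds 2) := by
      have hc : Continuous fun ε : ℝ × ℝ => 1 + Real.sqrt (1 - ε.2 ^ 2) :=
        continuous_const.add ((continuous_const.sub (continuous_snd.pow 2)).sqrt)
      have := (hc.continuousAt (x := ((0,0):ℝ×ℝ))).tendsto.mono_left (nhdsWithin_le_nhds (s := {ε : ℝ × ℝ | 0 < ε.1 ∧ 0 < ε.2 ∧ ε.2 < 1}))
      simpa [one_add_one_eq_two] using this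
    exact (Real.continuousAt_log two_ne_zero).tendsto.comp harg
  have hden : Filter.Tendsto (fun ε : ℝ × ℝ =>
      Real.log (1 - Real.sqrt (1 - ε.2 ^ 2)) - Real.log (1 + Real.sqrt (1 - ε.2 ^ 2))) l
      Filter.atBot := by
    simpa [sub_eq_add_neg] using hA'.atBot_add hB.neg
  have hinv : Filter.Tendsto (fun ε : ℝ × ℝ =>
      (Real.log (1 - Real.sqrt (1 - ε.2 ^ 2)) - Real.log (1 + Real.sqrt (1 - ε.2 ^ 2)))⁻¹) l
      (nhds 0) := by
    have hneg : Filter.Tendsto (fun ε : ℝ × ℝ =>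
        -(Real.log (1 - Real.sqrt (1 - ε.2 ^ 2)) - Real.log (1 + Real.sqrt (1 - ε.2 ^ 2)))) l
        Filter.atTop := Filter.tendsto_neg_atTop_iff.mpr hden
    have h0 := hneg.inv_tendsto_atTop
    have h0' := h0.neg
    have heq : (fun ε : ℝ × ℝ =>
        (Real.log (1 - Real.sqrt (1 - ε.2 ^ 2)) - Real.log (1 + Real.sqrt (1 - ε.2 ^ 2)))⁻¹) =
        fun ε : ℝ × ℝ =>
        -((-(Real.log (1 - Real.sqrt (1 - ε.2 ^ 2)) - Real.log (1 + Real.sqrt (1 - ε.2 ^ 2))))⁻¹) := by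
      funext ε
      rw [inv_neg, neg_neg]
    rw [heq]
    simpa [Pi.inv_def] using h0'
  have := hnum.mul hinv
  simp only [toyU, div_eq_mul_inv]
  simpa using this
end
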